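/- Let ρ, σ ≥ 0 and let S : G_ρ → G_σ be subadditive with S(0) = 0. Suppose Σ ⊆ G_ρ is a Lebesgue-measurable set, symmetric in the sense that u ∈ Σ implies −_ρ u := −u/(1 + ρ·u) ∈ Σ, containing 0, such that Σ ∩ (0, δ) has positive Lebesgue measure for every δ > 0, and such that the restriction of S to Σ is continuous at 0 (i.e. S(u) → 0 as u → 0 within Σ). Then S is continuous at 0, and hence continuous at every point of G_ρ. -/

import Mathlib

/-!
Subadditivity gives `S(u ∘ v⁻¹) ≤ S u ∘_σ S(v⁻¹)`. By the Steinhaus theorem, transported to `G_ρ`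
along the isomorphism `y ↦ (exp y - 1) / ρ` from `(ℝ, +)` (the identity when `ρ = 0`), every point
near `0` is such a quotient of two small positive points of `Sg`, and then `v⁻¹ ∈ Sg` is small as
well, so `S` is small from above near `0`. The bound from below follows from
`0 = S(x ∘ x⁻¹) ≤ S x ∘_σ S(x⁻¹)`, and continuity at an arbitrary `x` from `y = x ∘ (x⁻¹ ∘ y)` and
`x = y ∘ (y⁻¹ ∘ x)`.
-/

open Filter Topology MeasureTheory Set Pointwise

def popaGroup (ρ : ℝ) : Set ℝ := {x | 0 < 1 + ρ * x}

def popaMul (ρ x y : ℝ) : ℝ := x + y + ρ * x * y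

noncomputable def popaInv (ρ u : ℝ) : ℝ := -u / (1 + ρ * u)

def PopaSubadditive (ρ σ : ℝ) (S : ℝ → ℝ) : Prop :=
  ∀ x ∈ popaGroup ρ, ∀ y ∈ popaGroup ρ, S (popaMul ρ x y) ≤ popaMul σ (S x) (S y)

section PopaGroup

variable {ρ : ℝ}

theorem isOpen_popaGroup (ρ : ℝ) : IsOpen (popaGroup ρ) :=
  isOpen_lt continuous_const (by fun_prop)

theorem popaGroup_mem_nhds_zero (ρ : ℝ) : popaGroup ρ ∈ 𝓝 0 :=
  (isOpen_popaGroup ρ).mem_nhds (by simp [popaGroup])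

theorem one_add_mul_popaMul (ρ x y : ℝ) :
    1 + ρ * popaMul ρ x y = (1 + ρ * x) * (1 + ρ * y) := by
  unfold popaMul; ring

theorem popaInv_mul_one_add {u : ℝ} (hu : 1 + ρ * u ≠ 0) : popaInv ρ u * (1 + ρ * u) = -u :=
  div_mul_cancel₀ _ hu

theorem one_add_mul_popaInv {u : ℝ} (hu : 1 + ρ * u ≠ 0) :
    1 + ρ * popaInv ρ u = (1 + ρ * u)⁻¹ :=
  eq_inv_of_mul_eq_one_left (by linear_combination ρ * popaInv_mul_one_add hu)

theorem popaMul_mem {x y : ℝ} (hx : x ∈ popaGroup ρ) (hy : y ∈ popaGroup ρ) :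
    popaMul ρ x y ∈ popaGroup ρ := by
  show 0 < 1 + ρ * popaMul ρ x y
  rw [one_add_mul_popaMul]
  exact mul_pos hx hy

theorem popaInv_mem {u : ℝ} (hu : u ∈ popaGroup ρ) : popaInv ρ u ∈ popaGroup ρ := by
  show 0 < 1 + ρ * popaInv ρ u
  rw [one_add_mul_popaInv hu.ne']
  exact inv_pos.2 hu

theorem popaMul_popaInv_cancel {x : ℝ} (hx : 1 + ρ * x ≠ 0) : popaMul ρ x (popaInv ρ x) = 0 := by
  unfold popaMul; linear_combination popaInv_mul_one_add hx

theorem popaInv_popaMul_cancel {x : ℝ} (hx : 1 + ρ * x ≠ 0) : popaMul ρ (popaInv ρ x) x = 0 := by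
  unfold popaMul; linear_combination popaInv_mul_one_add hx

theorem popaMul_popaInv_cancel_left {x : ℝ} (hx : 1 + ρ * x ≠ 0) (y : ℝ) :
    popaMul ρ x (popaMul ρ (popaInv ρ x) y) = y := by
  unfold popaMul; linear_combination (1 + ρ * y) * popaInv_mul_one_add hx

theorem abs_popaInv_le (hρ : 0 ≤ ρ) {u : ℝ} (hu : 0 ≤ u) : |popaInv ρ u| ≤ u := by
  have h1 : 1 ≤ 1 + ρ * u := le_add_of_nonneg_right (mul_nonneg hρ hu)
  rw [popaInv, abs_div, abs_neg, abs_of_nonneg hu, abs_of_pos (by linarith)]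
  exact div_le_self hu h1

theorem tendsto_popaInv_zero (ρ : ℝ) : Tendsto (popaInv ρ) (𝓝 0) (𝓝 0) := by
  have h : ContinuousAt (popaInv ρ) 0 :=
    continuousAt_id.neg.div (by fun_prop) (by simp)
  simpa [popaInv] using h.tendsto

end PopaGroup

section Steinhaus

variable {ρ : ℝ}

/-- Steinhaus's theorem for `(ℝ, +)`, transported to `G_ρ` along the homomorphism `ψ`. -/
theorem eventually_exists_popaMul_popaInv_of_hom {ψ φ : ℝ → ℝ} (hψ : Differentiable ℝ ψ)
    (hψ_sub : ∀ a b, ψ (a - b) = popaMul ρ (ψ a) (popaInv ρ (ψ b)))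
    (hψφ : ∀ x ∈ popaGroup ρ, ψ (φ x) = x) (hφ : ContinuousAt φ 0) (hφ0 : φ 0 = 0)
    {A : Set ℝ} (hA : MeasurableSet A) (hAG : A ⊆ popaGroup ρ) (hApos : 0 < volume A) :
    ∀ᶠ x in 𝓝 0, ∃ u ∈ A, ∃ v ∈ A, x = popaMul ρ u (popaInv ρ v) := by
  set B := ψ ⁻¹' A
  have hA_image : A ⊆ ψ '' B := fun a ha => ⟨φ a, by simpa [B, hψφ a (hAG ha)], hψφ a (hAG ha)⟩
  have hBpos : 0 < volume B := by
    refine pos_iff_ne_zero.2 fun hB => hApos.ne' (measure_mono_null hA_image ?_)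
    exact addHaar_image_eq_zero_of_differentiableOn_of_addHaar_eq_zero volume
      hψ.differentiableOn hB
  have hBB : B - B ∈ 𝓝 0 :=
    Measure.sub_mem_nhds_zero_of_addHaar_pos volume B (hA.preimage hψ.continuous.measurable) hBpos
  filter_upwards [hφ.preimage_mem_nhds (hφ0 ▸ hBB), popaGroup_mem_nhds_zero ρ] with x hxB hxG
  obtain ⟨b, hb, c, hc, hbc⟩ := hxB
  exact ⟨ψ b, hb, ψ c, hc, ((hψφ x hxG).symm.trans (congrArg ψ hbc.symm)).trans (hψ_sub b c)⟩

noncomputable def popaExp (ρ y : ℝ) : ℝ := (Real.exp y - 1) / ρ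

theorem one_add_mul_popaExp (hρ : ρ ≠ 0) (y : ℝ) : 1 + ρ * popaExp ρ y = Real.exp y := by
  unfold popaExp; field_simp; ring

theorem popaExp_sub (hρ : ρ ≠ 0) (a b : ℝ) :
    popaExp ρ (a - b) = popaMul ρ (popaExp ρ a) (popaInv ρ (popaExp ρ b)) := by
  have hb : 1 + ρ * popaExp ρ b ≠ 0 := by rw [one_add_mul_popaExp hρ]; positivity
  refine mul_left_cancel₀ hρ (add_left_cancel (a := 1) ?_)
  rw [one_add_mul_popaMul, one_add_mul_popaInv hb, one_add_mul_popaExp hρ,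
    one_add_mul_popaExp hρ, one_add_mul_popaExp hρ, Real.exp_sub, div_eq_mul_inv]

theorem popaExp_log (hρ : ρ ≠ 0) {x : ℝ} (hx : x ∈ popaGroup ρ) :
    popaExp ρ (Real.log (1 + ρ * x)) = x := by
  unfold popaExp; rw [Real.exp_log hx]; field_simp; ring

theorem eventually_exists_popaMul_popaInv (hρ : 0 ≤ ρ) {A : Set ℝ} (hA : MeasurableSet A)
    (hAG : A ⊆ popaGroup ρ) (hApos : 0 < volume A) :
    ∀ᶠ x in 𝓝 0, ∃ u ∈ A, ∃ v ∈ A, x = popaMul ρ u (popaInv ρ v) := by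
  rcases hρ.eq_or_lt with rfl | hρ
  · refine eventually_exists_popaMul_popaInv_of_hom (ψ := id) (φ := id) differentiable_id
      (fun a b => ?_) (fun _ _ => rfl) continuousAt_id rfl hA hAG hApos
    simp [popaMul, popaInv, sub_eq_add_neg]
  · refine eventually_exists_popaMul_popaInv_of_hom (ψ := popaExp ρ)
      (φ := fun x => Real.log (1 + ρ * x)) (by unfold popaExp; fun_prop) (popaExp_sub hρ.ne')
      (fun x hx => popaExp_log hρ.ne' hx) ?_ (by simp) hA hAG hApos
    exact ContinuousAt.log (by fun_prop) (by simp)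

end Steinhaus

section Subadditive

variable {ρ σ : ℝ} {S : ℝ → ℝ}

theorem eventually_lt_of_tendsto_nhdsWithin (hρ : 0 ≤ ρ) (hsub : PopaSubadditive ρ σ S)
    {Sg : Set ℝ} (hSgG : Sg ⊆ popaGroup ρ) (hSgmeas : MeasurableSet Sg)
    (hSgsym : ∀ u ∈ Sg, popaInv ρ u ∈ Sg) (hSgpos : ∀ δ > (0 : ℝ), 0 < volume (Sg ∩ Ioo 0 δ))
    (hScont : Tendsto S (𝓝[Sg] 0) (𝓝 0)) {ε : ℝ} (hε : 0 < ε) :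
    ∀ᶠ x in 𝓝 0, S x < ε := by
  have hsmall : ∀ᶠ p in 𝓝[Sg] 0 ×ˢ 𝓝[Sg] 0, popaMul σ (S p.1) (S p.2) < ε := by
    have hc : Continuous fun q : ℝ × ℝ => popaMul σ q.1 q.2 := by unfold popaMul; fun_prop
    have h := (hc.tendsto (0, 0)).comp
      ((hScont.comp tendsto_fst).prodMk_nhds (hScont.comp tendsto_snd))
    simp only [popaMul, add_zero, mul_zero] at h
    exact h.eventually (eventually_lt_nhds hε)
  obtain ⟨s, hs, hss⟩ := mem_prod_self_iff.1 hsmall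
  obtain ⟨δ, hδ, hδs⟩ := Metric.mem_nhdsWithin_iff.1 hs
  filter_upwards [eventually_exists_popaMul_popaInv hρ (hSgmeas.inter measurableSet_Ioo)
    (inter_subset_left.trans hSgG) (hSgpos δ hδ)] with x ⟨u, ⟨huSg, hu⟩, v, ⟨hvSg, hv⟩, hx⟩
  have hus : u ∈ s := hδs ⟨by simpa [abs_of_pos hu.1] using hu.2, huSg⟩
  have hvs : popaInv ρ v ∈ s :=
    hδs ⟨by simpa using (abs_popaInv_le hρ hv.1.le).trans_lt hv.2, hSgsym v hvSg⟩
  calc S x ≤ popaMul σ (S u) (S (popaInv ρ v)) := hx ▸ hsub u (hSgG huSg) _ (hSgG (hSgsym v hvSg))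
    _ < ε := hss (mk_mem_prod hus hvs)

theorem neg_lt_of_nonneg_popaMul (hσ : 0 ≤ σ) {a b ε : ℝ} (hε : 0 < ε) (hb : 0 < 1 + σ * b)
    (hbε : b < ε) (h : 0 ≤ popaMul σ a b) : -ε < a := by
  unfold popaMul at h
  rcases le_or_gt b 0 with hb0 | hb0
  · nlinarith
  · nlinarith [mul_nonneg hσ hb0.le]

theorem tendsto_zero_of_eventually_lt (hσ : 0 ≤ σ) (hsub : PopaSubadditive ρ σ S) (hS0 : S 0 = 0)
    (hmap : MapsTo S (popaGroup ρ) (popaGroup σ)) (hlt : ∀ ε > 0, ∀ᶠ x in 𝓝 0, S x < ε) :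
    Tendsto S (𝓝 0) (𝓝 0) := by
  refine tendsto_order.2 ⟨fun a ha => ?_, hlt⟩
  filter_upwards [popaGroup_mem_nhds_zero ρ, tendsto_popaInv_zero ρ (hlt (-a) (by linarith))]
    with x hx hxinv
  have h := hsub x hx _ (popaInv_mem hx)
  rw [popaMul_popaInv_cancel hx.ne', hS0] at h
  simpa using neg_lt_of_nonneg_popaMul hσ (by linarith) (hmap (popaInv_mem hx)) hxinv h

theorem continuousAt_of_tendsto_zero (hsub : PopaSubadditive ρ σ S)
    (hmap : MapsTo S (popaGroup ρ) (popaGroup σ)) (h0 : Tendsto S (𝓝 0) (𝓝 0))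
    {x : ℝ} (hx : x ∈ popaGroup ρ) : ContinuousAt S x := by
  have hx0 : 1 + ρ * x ≠ 0 := hx.ne'
  have ht : Tendsto (fun y => popaMul ρ (popaInv ρ x) y) (𝓝 x) (𝓝 0) := by
    have h : ContinuousAt (fun y => popaMul ρ (popaInv ρ x) y) x := by
      unfold popaMul; fun_prop
    simpa [popaInv_popaMul_cancel hx0] using h.tendsto
  have hs : Tendsto (fun y => popaMul ρ (popaInv ρ y) x) (𝓝 x) (𝓝 0) := by
    have h : ContinuousAt (fun y => popaMul ρ (popaInv ρ y) x) x := by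
      unfold popaMul popaInv; fun_prop (disch := exact hx0)
    simpa [popaInv_popaMul_cancel hx0] using h.tendsto
  have hSt := h0.comp ht
  have hSs := h0.comp hs
  have hupper : Tendsto (fun y => popaMul σ (S x) (S (popaMul ρ (popaInv ρ x) y))) (𝓝 x)
      (𝓝 (S x)) := by
    simpa [popaMul] using (tendsto_const_nhds.add hSt).add (tendsto_const_nhds.mul hSt)
  have hlower : Tendsto (fun y => (S x - S (popaMul ρ (popaInv ρ y) x)) /
      (1 + σ * S (popaMul ρ (popaInv ρ y) x))) (𝓝 x) (𝓝 (S x)) := by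
    simpa [Pi.div_def] using (tendsto_const_nhds.sub hSs).div
      (tendsto_const_nhds.add (tendsto_const_nhds.mul hSs)) (by simp : (1 : ℝ) + σ * 0 ≠ 0)
  refine tendsto_of_tendsto_of_tendsto_of_le_of_le' hlower hupper ?_ ?_ <;>
    filter_upwards [(isOpen_popaGroup ρ).mem_nhds hx] with y hy
  · have hsy := popaMul_mem (popaInv_mem hy) hx
    have h := hsub y hy _ hsy
    rw [popaMul_popaInv_cancel_left hy.ne'] at h
    rw [div_le_iff₀ (hmap hsy), sub_le_iff_le_add]
    exact h.trans_eq (by unfold popaMul; ring)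
  · simpa [popaMul_popaInv_cancel_left hx0] using
      hsub x hx _ (popaMul_mem (popaInv_mem hx) hy)

end Subadditive

theorem popa_subadditive_thinned_continuity_general (ρ σ : ℝ) (hρ : 0 ≤ ρ) (hσ : 0 ≤ σ)
    (S : ℝ → ℝ) (hS0 : S 0 = 0)
    (hmap : ∀ x : ℝ, 0 < 1 + ρ * x → 0 < 1 + σ * S x)
    (hsub : ∀ x y : ℝ, 0 < 1 + ρ * x → 0 < 1 + ρ * y →
      S (x + y + ρ * x * y) ≤ S x + S y + σ * S x * S y)
    (Sg : Set ℝ) (hSgG : Sg ⊆ {x : ℝ | 0 < 1 + ρ * x})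
    (hSgmeas : MeasurableSet Sg)
    (hSgsym : ∀ u ∈ Sg, -u / (1 + ρ * u) ∈ Sg)
    (hSgpos : ∀ δ > (0 : ℝ), 0 < volume (Sg ∩ Set.Ioo 0 δ))
    (hScont : Tendsto S (𝓝[Sg] (0 : ℝ)) (𝓝 0)) :
    ContinuousAt S 0 ∧ ∀ x : ℝ, 0 < 1 + ρ * x → ContinuousAt S x := by
  have hsub' : PopaSubadditive ρ σ S := fun x hx y hy => hsub x y hx hy
  have hmap' : MapsTo S (popaGroup ρ) (popaGroup σ) := fun x hx => hmap x hx
  have h0 : Tendsto S (𝓝 0) (𝓝 0) := tendsto_zero_of_eventually_lt hσ hsub' hS0 hmap'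
    fun _ hε => eventually_lt_of_tendsto_nhdsWithin hρ hsub' hSgG hSgmeas hSgsym hSgpos hScont hε
  exact ⟨by rwa [ContinuousAt, hS0], fun x hx => continuousAt_of_tendsto_zero hsub' hmap' h0 hx⟩

/-- **Theorem G2.** For `ρ, σ ≥ 0`, let `S : (G_ρ, ∘_ρ) → (G_σ, ∘_σ)`
be subadditive with `S(0) = 0`. If `Sg ⊆ G_ρ` is a Lebesgue-measurable set,
symmetric under the Popa inverse `u ↦ -u/(1+ρ·u)`, containing `0`, with
`Sg ∩ (0, δ)` of positive measure for every `δ > 0`, and `S → 0` at `0` within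
`Sg`, then `S` is continuous at `0` and hence at every point of `G_ρ`. -/
theorem popa_subadditive_thinned_continuity (ρ σ : ℝ) (hρ : 0 ≤ ρ) (hσ : 0 ≤ σ)
    (S : ℝ → ℝ) (hS0 : S 0 = 0)
    (hmap : ∀ x : ℝ, 0 < 1 + ρ * x → 0 < 1 + σ * S x)
    (hsub : ∀ x y : ℝ, 0 < 1 + ρ * x → 0 < 1 + ρ * y →
      S (x + y + ρ * x * y) ≤ S x + S y + σ * S x * S y)
    (Sg : Set ℝ) (hSgG : Sg ⊆ {x : ℝ | 0 < 1 + ρ * x})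
    (hSgmeas : MeasurableSet Sg)
    (hSgsym : ∀ u ∈ Sg, -u / (1 + ρ * u) ∈ Sg)
    (hSg0 : (0 : ℝ) ∈ Sg)
    (hSgpos : ∀ δ > (0 : ℝ), 0 < volume (Sg ∩ Set.Ioo 0 δ))
    (hScont : Tendsto S (𝓝[Sg] (0 : ℝ)) (𝓝 0)) :
    ContinuousAt S 0 ∧ ∀ x : ℝ, 0 < 1 + ρ * x → ContinuousAt S x :=
  popa_subadditive_thinned_continuity_general ρ σ hρ hσ S hS0 hmap hsub Sg hSgG hSgmeas hSgsym
    hSgpos hScont
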